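/- arXiv:1809.02783 — 2 statements merged into one kernel-verified Lean document; each statement's English description precedes it below -/
import Mathlib

section
/- Let f : S^{n-1} × ℝ → ℝ (n ≥ 2) be a continuous function satisfying f(u, p + u·m) = f(u, p) for all u ∈ S^{n-1}, p ∈ ℝ, and m ∈ ℤ^n. Then f(u, p + u·x) = f(u, p) for all x ∈ ℝ^n, i.e., f is independent of the second variable: f(u, p) = f(u, 0) for all p. -/
/-!
For a fixed direction `u`, the periods of `p ↦ f (u, p)` form a closed subgroup of `ℝ` containing
every coordinate `u i`. If two coordinates have irrational ratio, this subgroup is dense, hence all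
of `ℝ`, and `f (u, ·)` is constant. Such directions are dense in the sphere: moving `u` along the
circle in a coordinate plane on which the ratio of the two coordinates is the parameter, irrational
parameters are dense. Continuity of `f` then gives `f (u, p) = f (u, q)` for every `u`.
-/

open Function

theorem Continuous.apply_eq_of_periodic_of_dense {α β : Type*} [TopologicalSpace α] [AddGroup α]
    [ContinuousAdd α] [TopologicalSpace β] [T2Space β] {f : α → β} (hf : Continuous f)
    {s : Set α} (hs : ∀ c ∈ s, Periodic f c) (hd : Dense (AddSubgroup.closure s : Set α))
    (x y : α) : f x = f y := by
  have hperiods : IsClosed {c | Periodic f c} := by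
    simp only [Periodic, Set.ofPred_forall]
    exact isClosed_iInter fun z => isClosed_eq (by fun_prop) continuous_const
  have hclosure : (AddSubgroup.closure s : Set α) ⊆ {c | Periodic f c} := fun c hc => by
    induction hc using AddSubgroup.closure_induction with
    | mem c hc => exact hs c hc
    | zero => exact fun z => by rw [add_zero]
    | add a b _ _ ha hb => exact ha.add_period hb
    | neg a _ ha => exact ha.neg
  have := (hperiods.closure_subset_iff.mpr hclosure) (hd (-x + y)) x
  rw [add_neg_cancel_left] at this
  exact this.symm

theorem Continuous.apply_eq_of_periodic_of_irrational_div {β : Type*} [TopologicalSpace β]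
    [T2Space β] {f : ℝ → β} (hf : Continuous f) {a b : ℝ} (ha : Periodic f a)
    (hb : Periodic f b) (hab : Irrational (a / b)) (x y : ℝ) : f x = f y :=
  hf.apply_eq_of_periodic_of_dense (s := {a, b}) (by simpa using And.intro ha hb)
    (dense_addSubgroupClosure_pair_iff.mpr hab) x y

section UnitSphere

variable {ι : Type*} [Fintype ι] [DecidableEq ι]

theorem sum_sq_update (g : ι → ℝ) (i : ι) (x : ℝ) :
    ∑ k, update g i x k ^ 2 = ∑ k, g k ^ 2 - g i ^ 2 + x ^ 2 := by
  have h : (fun k => update g i x k ^ 2) = update (fun k => g k ^ 2) i (x ^ 2) :=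
    funext fun k => apply_update (fun _ y => y ^ 2) g i x k
  rw [h, Finset.sum_update_of_mem (Finset.mem_univ i),
    ← Finset.add_sum_erase _ _ (Finset.mem_univ i), Finset.sdiff_singleton_eq_erase]
  ring

theorem exists_curve_div_eq (u : ι → ℝ) {i j : ι} (hij : i ≠ j) (hj : u j ≠ 0) :
    ∃ γ : ℝ → ι → ℝ, Continuous γ ∧ γ (u i / u j) = u ∧
      (∀ t, ∑ k, γ t k ^ 2 = ∑ k, u k ^ 2) ∧ ∀ t, γ t i / γ t j = t := by
  set t₀ := u i / u j
  have hpos : ∀ t : ℝ, 0 < √(1 + t ^ 2) := fun t => Real.sqrt_pos.mpr (by positivity)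
  -- `(t * c t, c t)` runs through the circle of radius `‖(u i, u j)‖`, passing through `u` at `t₀`
  set c : ℝ → ℝ := fun t => u j * √(1 + t₀ ^ 2) / √(1 + t ^ 2)
  have hc : ∀ t, c t ≠ 0 := fun t => div_ne_zero (mul_ne_zero hj (hpos t₀).ne') (hpos t).ne'
  have hc_sq : ∀ t, c t ^ 2 * (1 + t ^ 2) = u i ^ 2 + u j ^ 2 := fun t => by
    have hsqrt : ∀ s : ℝ, √(1 + s ^ 2) ^ 2 = 1 + s ^ 2 := fun s => Real.sq_sqrt (by positivity)
    simp only [c, div_pow, mul_pow, hsqrt]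
    simp only [t₀]
    field_simp
    ring
  refine ⟨fun t => update (update u i (t * c t)) j (c t), ?_, ?_, fun t => ?_, fun t => ?_⟩
  · have hc_cont : Continuous c := continuous_const.div (by fun_prop) fun t => (hpos t).ne'
    fun_prop
  · have hc₀ : c t₀ = u j := mul_div_cancel_right₀ _ (hpos t₀).ne'
    simp only [hc₀, t₀, div_mul_cancel₀ _ hj, update_eq_self]
  · rw [sum_sq_update, sum_sq_update, update_of_ne hij.symm]
    linear_combination hc_sq t
  · simp [update_of_ne hij, mul_div_cancel_right₀ _ (hc t)]

theorem dense_setOf_irrational_div [Nontrivial ι] :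
    Dense {u : {v : ι → ℝ // ∑ k, v k ^ 2 = 1} | ∃ i j, Irrational (u.1 i / u.1 j)} := by
  intro u
  obtain ⟨j, hj⟩ : ∃ j, u.1 j ≠ 0 := by
    by_contra! h
    simpa [h] using u.2
  obtain ⟨i, hij⟩ := exists_ne j
  obtain ⟨γ, hγ, hγu, hγ_sum, hγ_div⟩ := exists_curve_div_eq u.1 hij hj
  let Γ : ℝ → {v : ι → ℝ // ∑ k, v k ^ 2 = 1} := fun t => ⟨γ t, (hγ_sum t).trans u.2⟩
  have hΓ : Continuous Γ := hγ.subtype_mk _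
  have hΓu : Γ (u.1 i / u.1 j) = u := Subtype.ext hγu
  refine closure_mono ?_ (hΓ.range_subset_closure_image_dense dense_irrational ⟨_, hΓu⟩)
  rintro _ ⟨t, ht, rfl⟩
  exact ⟨i, j, (hγ_div t).symm ▸ ht⟩

end UnitSphere

/-- A continuous function `f : S^{n-1} × ℝ → ℝ` (n ≥ 2) satisfying
`f (u, p + u·m) = f (u, p)` for all integer vectors `m` satisfies
`f (u, p + u·x) = f (u, p)` for all `x ∈ ℝⁿ`; in particular `f (u, p) = f (u, 0)`. -/
theorem stmt2 (n : ℕ) (hn : 2 ≤ n)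
    (f : {v : Fin n → ℝ // ∑ i, (v i) ^ 2 = 1} × ℝ → ℝ)
    (hf : Continuous f)
    (hper : ∀ (u : {v : Fin n → ℝ // ∑ i, (v i) ^ 2 = 1}) (p : ℝ) (m : Fin n → ℤ),
      f (u, p + ∑ i, u.1 i * (m i : ℝ)) = f (u, p)) :
    (∀ (u : {v : Fin n → ℝ // ∑ i, (v i) ^ 2 = 1}) (p : ℝ) (x : Fin n → ℝ),
      f (u, p + ∑ i, u.1 i * x i) = f (u, p)) ∧
    (∀ (u : {v : Fin n → ℝ // ∑ i, (v i) ^ 2 = 1}) (p : ℝ), f (u, p) = f (u, 0)) := by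
  have : Nontrivial (Fin n) := Fin.nontrivial_iff_two_le.mpr hn
  have hconst : ∀ u p q, f (u, p) = f (u, q) := by
    intro u p q
    have hclosed : IsClosed {u | f (u, p) = f (u, q)} := isClosed_eq (by fun_prop) (by fun_prop)
    refine hclosed.closure_subset_iff.mpr ?_ (dense_setOf_irrational_div u)
    rintro u ⟨i, j, hij⟩
    have hperiod : ∀ k, Periodic (fun p => f (u, p)) (u.1 k) := fun k p => by
      simpa [Pi.single_apply] using hper u p (Pi.single k 1)
    exact (hf.comp (by fun_prop)).apply_eq_of_periodic_of_irrational_div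
      (hperiod i) (hperiod j) hij p q
  exact ⟨fun u p x => hconst u _ p, fun u p => hconst u p 0⟩
end

section
/- Let d be the metric on ℝ² given by d((x₁,x₂),(y₁,y₂)) = √((x₁−y₁)² + (x₂−y₂)²) + |7x₂ + sin(2πx₂) − 7y₂ − sin(2πy₂)|. Then d is a metric (symmetric, nonnegative, vanishing exactly on the diagonal, satisfying the triangle inequality), it is invariant under integer translations d(x + m, y + m) = d(x, y) for m ∈ ℤ², and every straight line segment is a geodesic: if y lies on the segment from x to z then d(x,y) + d(y,z) = d(x,z). -/
open Real

/-! The second summand is `|g x₂ - g y₂|` for `g t = 7 t + sin (2π t)`. Since `sin` is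
`1`-Lipschitz and `2π < 7`, `g` is monotone, so `|g a - g b|` is additive along the segment from
`a` to `c`, exactly like the Euclidean distance. Each of the two summands is thus a pseudometric
that is additive along straight segments; the Euclidean one alone separates points. Integer
translations change `g` only by a constant, because `sin (2π t)` has period `1`. -/

theorem Monotone.abs_sub_add_abs_sub_of_mem_uIcc {α : Type*} [LinearOrder α] {g : α → ℝ}
    (hg : Monotone g) {a b c : α} (hb : b ∈ Set.uIcc a c) :
    |g a - g b| + |g b - g c| = |g a - g c| := by
  have hgb : g b ∈ segment ℝ (g a) (g c) := segment_eq_uIcc (g a) (g c) ▸ hg.mapsTo_uIcc hb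
  simpa only [Real.dist_eq] using dist_add_dist_of_mem_segment hgb

theorem monotone_mul_add_of_abs_sub_le {f : ℝ → ℝ} {c : ℝ}
    (hf : ∀ a b, |f a - f b| ≤ c * |a - b|) : Monotone fun t ↦ c * t + f t := by
  intro a b hab
  have := (le_abs_self _).trans (hf a b)
  rw [abs_sub_comm, abs_of_nonneg (sub_nonneg.2 hab)] at this
  linarith

noncomputable def busemannProfile (t : ℝ) : ℝ := 7 * t + sin (2 * π * t)

theorem monotone_busemannProfile : Monotone busemannProfile := by
  refine monotone_mul_add_of_abs_sub_le fun a b ↦ ?_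
  have h2pi : 2 * π ≤ 7 := by linarith [pi_lt_d2]
  calc |sin (2 * π * a) - sin (2 * π * b)| ≤ |2 * π * a - 2 * π * b| := abs_sin_sub_sin_le _ _
    _ = 2 * π * |a - b| := by rw [← mul_sub, abs_mul, abs_of_pos two_pi_pos]
    _ ≤ 7 * |a - b| := by gcongr

theorem busemannProfile_add_intCast (t : ℝ) (n : ℤ) :
    busemannProfile (t + n) = busemannProfile t + 7 * n := by
  rw [busemannProfile, busemannProfile, mul_add, ← sin_add_int_mul_two_pi (2 * π * t) n]
  ring_nf

theorem sqrt_sq_add_sq_eq_dist (x y : ℝ × ℝ) :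
    √((x.1 - y.1) ^ 2 + (x.2 - y.2) ^ 2) =
      dist (Complex.equivRealProdCLM.symm x) (Complex.equivRealProdCLM.symm y) := by
  simp [Complex.dist_eq_re_im]

/-- Busemann's example. The function
`d(x,y) = √((x₁−y₁)² + (x₂−y₂)²) + |7x₂ + sin(2πx₂) − 7y₂ − sin(2πy₂)|` on ℝ² is a metric,
is invariant under integer translations, and every straight segment is a geodesic. -/
theorem stmt9 (d : (ℝ × ℝ) → (ℝ × ℝ) → ℝ)
    (hd : ∀ x y : ℝ × ℝ, d x y =
      Real.sqrt ((x.1 - y.1) ^ 2 + (x.2 - y.2) ^ 2) +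
        |7 * x.2 + Real.sin (2 * π * x.2) - 7 * y.2 - Real.sin (2 * π * y.2)|) :
    (∀ x y, d x y = d y x) ∧
    (∀ x y, 0 ≤ d x y) ∧
    (∀ x y, d x y = 0 ↔ x = y) ∧
    (∀ x y z, d x z ≤ d x y + d y z) ∧
    (∀ (x y : ℝ × ℝ) (m : ℤ × ℤ),
      d (x.1 + (m.1 : ℝ), x.2 + (m.2 : ℝ)) (y.1 + (m.1 : ℝ), y.2 + (m.2 : ℝ)) = d x y) ∧
    (∀ (x z : ℝ × ℝ) (t : ℝ), t ∈ Set.Icc (0 : ℝ) 1 →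
      d x ((1 - t) • x + t • z) + d ((1 - t) • x + t • z) z = d x z) := by
  set e := Complex.equivRealProdCLM.symm
  have hd' : ∀ x y, d x y = dist (e x) (e y) + |busemannProfile x.2 - busemannProfile y.2| := by
    intro x y
    rw [hd, sqrt_sq_add_sq_eq_dist, busemannProfile, busemannProfile, sub_add_eq_sub_sub]
  refine ⟨fun x y ↦ ?_, fun x y ↦ ?_, fun x y ↦ ?_, fun x y z ↦ ?_, fun x y m ↦ ?_, ?_⟩
  · rw [hd', hd', dist_comm, abs_sub_comm]
  · rw [hd']
    positivity
  · rw [hd', add_eq_zero_iff_of_nonneg dist_nonneg (abs_nonneg _), dist_eq_zero,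
      e.injective.eq_iff]
    exact ⟨And.left, fun h ↦ ⟨h, by rw [h, sub_self, abs_zero]⟩⟩
  · rw [hd', hd', hd']
    linarith [dist_triangle (e x) (e y) (e z), abs_sub_le (busemannProfile x.2)
      (busemannProfile y.2) (busemannProfile z.2)]
  · rw [hd', hd', ← sqrt_sq_add_sq_eq_dist, ← sqrt_sq_add_sq_eq_dist]
    simp only [busemannProfile_add_intCast, add_sub_add_right_eq_sub]
  · rintro x z t ⟨ht₀, ht₁⟩
    have hy : e ((1 - t) • x + t • z) ∈ segment ℝ (e x) (e z) :=
      ⟨1 - t, t, by linarith, ht₀, by ring, by rw [map_add, map_smul, map_smul]⟩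
    have hy₂ : ((1 - t) • x + t • z).2 ∈ Set.uIcc x.2 z.2 :=
      segment_eq_uIcc x.2 z.2 ▸ ⟨1 - t, t, by linarith, ht₀, by ring, rfl⟩
    rw [hd', hd', hd', add_add_add_comm, dist_add_dist_of_mem_segment hy,
      monotone_busemannProfile.abs_sub_add_abs_sub_of_mem_uIcc hy₂]
end
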